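/- (Theorem 3, positive normalized typical minimum distance region) Let Ω be an LT output degree distribution, r_i ∈ (0,1], r_o ∈ (0,1). Then the normalized typical minimum distance δ* is strictly positive if and only if r_i·(1 − r_o) > sup_{λ ∈ 𝒟_λ} [ r_i·H_b(λ) + log₂(1 − ρ_λ) ]. -/
import Mathlib


open Finset Filter

/-- Binary entropy function (base-2 logarithms). -/
noncomputable def Hb (x : ℝ) : ℝ := -x * Real.logb 2 x - (1 - x) * Real.logb 2 (1 - x)

/-- `ρ_λ = (1/2)·Σ_{j=1}^{dmax} Ω_j·(1 − (1 − 2λ)^j)`. -/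
noncomputable def rho (dmax : ℕ) (Ω : ℕ → ℝ) (lam : ℝ) : ℝ :=
  (1 / 2) * ∑ j ∈ Finset.Icc 1 dmax, Ω j * (1 - (1 - 2 * lam) ^ j)

open scoped Classical in
/-- The domain `𝒟_λ`: `(0,1)` if `Ω_j = 0` for every even `j`, and `(0,1]` otherwise. -/
noncomputable def Dset (dmax : ℕ) (Ω : ℕ → ℝ) : Set ℝ :=
  if ∀ j ∈ Finset.Icc 1 dmax, Even j → Ω j = 0 then Set.Ioo 0 1 else Set.Ioc 0 1

/-- `f(δ,λ) = r_i·H_b(λ) + δ·log₂ ρ_λ + (1−δ)·log₂(1−ρ_λ)`. -/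
noncomputable def ff (dmax : ℕ) (Ω : ℕ → ℝ) (ri δ lam : ℝ) : ℝ :=
  ri * Hb lam + δ * Real.logb 2 (rho dmax Ω lam) + (1 - δ) * Real.logb 2 (1 - rho dmax Ω lam)

/-- `f_max(δ) = sup_{λ ∈ 𝒟_λ} f(δ,λ)`. -/
noncomputable def fmax (dmax : ℕ) (Ω : ℕ → ℝ) (ri δ : ℝ) : ℝ :=
  sSup (ff dmax Ω ri δ '' Dset dmax Ω)

/-- Growth rate `G(δ) = H_b(δ) − r_i·(1 − r_o) + f_max(δ)`. -/
noncomputable def Gr (dmax : ℕ) (Ω : ℕ → ℝ) (ri ro δ : ℝ) : ℝ :=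
  Hb δ - ri * (1 - ro) + fmax dmax Ω ri δ

/-- Normalized typical minimum distance `δ*`: `0` if `lim_{δ→0⁺} G(δ) ≥ 0`, and
`inf {δ > 0 : G(δ) > 0}` otherwise. -/
noncomputable def deltaStar (dmax : ℕ) (Ω : ℕ → ℝ) (ri ro : ℝ) : ℝ :=
  if 0 ≤ limUnder (nhdsWithin 0 (Set.Ioi 0)) (Gr dmax Ω ri ro) then 0
  else sInf {δ : ℝ | 0 < δ ∧ 0 < Gr dmax Ω ri ro δ}

/-! ### Auxiliary lemmas -/

lemma Hb_eq (x : ℝ) : Hb x = Real.binEntropy x / Real.log 2 := by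
  simp [Hb, Real.binEntropy, Real.logb, Real.log_inv]
  ring

lemma Hb_continuous : Continuous Hb := by
  simp only [funext Hb_eq]
  exact Real.binEntropy_continuous.div_const _

lemma Hb_zero : Hb 0 = 0 := by simp [Hb]

lemma Hb_le_one (x : ℝ) : Hb x ≤ 1 := by
  rw [Hb_eq, div_le_one (Real.log_pos one_lt_two)]
  exact Real.binEntropy_le_log_two

lemma Hb_half : Hb (1/2 : ℝ) = 1 := by
  rw [Hb_eq, one_div, Real.binEntropy_two_inv, div_self (Real.log_pos one_lt_two).ne']

lemma Dset_subset (dmax : ℕ) (Ω : ℕ → ℝ) : Dset dmax Ω ⊆ Set.Ioc 0 1 := by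
  unfold Dset
  split_ifs
  · exact Set.Ioo_subset_Ioc_self
  · exact subset_rfl

lemma half_mem_Dset (dmax : ℕ) (Ω : ℕ → ℝ) : (1/2 : ℝ) ∈ Dset dmax Ω := by
  unfold Dset
  split_ifs
  · constructor <;> norm_num
  · constructor <;> norm_num

section Aux
variable {dmax : ℕ} {Ω : ℕ → ℝ} {ri : ℝ}
  (hΩpos : ∀ j ∈ Finset.Icc 1 dmax, 0 ≤ Ω j)
  (hΩsum : ∑ j ∈ Finset.Icc 1 dmax, Ω j = 1)

include hΩpos hΩsum in
lemma rho_mem {lam : ℝ} (h0 : 0 ≤ lam) (h1 : lam ≤ 1) :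
    rho dmax Ω lam ∈ Set.Icc (0:ℝ) 1 := by
  have hx : |1 - 2 * lam| ≤ 1 := by rw [abs_le]; constructor <;> linarith
  have hpow : ∀ j : ℕ, |(1 - 2 * lam) ^ j| ≤ 1 := by
    intro j
    rw [abs_pow]
    exact pow_le_one₀ (abs_nonneg _) hx
  have hterm : ∀ j ∈ Finset.Icc 1 dmax,
      0 ≤ Ω j * (1 - (1 - 2 * lam) ^ j) ∧ Ω j * (1 - (1 - 2 * lam) ^ j) ≤ 2 * Ω j := by
    intro j hj
    have h := abs_le.mp (hpow j)
    have hΩ := hΩpos j hj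
    exact ⟨mul_nonneg hΩ (by linarith [h.2]), by nlinarith [h.1, h.2]⟩
  constructor
  · unfold rho
    have : (0:ℝ) ≤ ∑ j ∈ Finset.Icc 1 dmax, Ω j * (1 - (1 - 2 * lam) ^ j) :=
      Finset.sum_nonneg fun j hj => (hterm j hj).1
    linarith
  · unfold rho
    have : ∑ j ∈ Finset.Icc 1 dmax, Ω j * (1 - (1 - 2 * lam) ^ j)
        ≤ ∑ j ∈ Finset.Icc 1 dmax, 2 * Ω j :=
      Finset.sum_le_sum fun j hj => (hterm j hj).2
    rw [← Finset.mul_sum, hΩsum] at this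
    linarith

include hΩsum in
lemma rho_half : rho dmax Ω (1/2) = 1/2 := by
  unfold rho
  have : ∀ j ∈ Finset.Icc 1 dmax, Ω j * (1 - (1 - 2 * (1/2:ℝ)) ^ j) = Ω j := by
    intro j hj
    have hj1 : j ≠ 0 := by
      have := (Finset.mem_Icc.mp hj).1; omega
    rw [show (1 - 2 * (1/2:ℝ)) = 0 by norm_num, zero_pow hj1]
    ring
  rw [Finset.sum_congr rfl this, hΩsum]
  norm_num

include hΩpos hΩsum in
lemma ff_le_ri (hri : 0 ≤ ri) {δ lam : ℝ} (hδ0 : 0 ≤ δ) (hδ1 : δ ≤ 1)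
    (hlam : lam ∈ Dset dmax Ω) : ff dmax Ω ri δ lam ≤ ri := by
  obtain ⟨hl0, hl1⟩ := Dset_subset dmax Ω hlam
  obtain ⟨hρ0, hρ1⟩ := rho_mem hΩpos hΩsum hl0.le hl1
  have h1 : Real.logb 2 (rho dmax Ω lam) ≤ 0 :=
    Real.logb_nonpos one_lt_two hρ0 hρ1
  have h2 : Real.logb 2 (1 - rho dmax Ω lam) ≤ 0 :=
    Real.logb_nonpos one_lt_two (by linarith) (by linarith)
  have h3 : ri * Hb lam ≤ ri := by
    calc ri * Hb lam ≤ ri * 1 := mul_le_mul_of_nonneg_left (Hb_le_one lam) hri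
    _ = ri := mul_one ri
  have h4 : δ * Real.logb 2 (rho dmax Ω lam) ≤ 0 := mul_nonpos_of_nonneg_of_nonpos hδ0 h1
  have h5 : (1 - δ) * Real.logb 2 (1 - rho dmax Ω lam) ≤ 0 :=
    mul_nonpos_of_nonneg_of_nonpos (by linarith) h2
  unfold ff
  linarith

include hΩpos hΩsum in
lemma bddAbove_ffimg (hri : 0 ≤ ri) {δ : ℝ} (hδ0 : 0 ≤ δ) (hδ1 : δ ≤ 1) :
    BddAbove (ff dmax Ω ri δ '' Dset dmax Ω) := by
  refine ⟨ri, ?_⟩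
  rintro _ ⟨lam, hlam, rfl⟩
  exact ff_le_ri hΩpos hΩsum hri hδ0 hδ1 hlam

lemma ffimg_nonempty (δ : ℝ) : (ff dmax Ω ri δ '' Dset dmax Ω).Nonempty :=
  ⟨_, Set.mem_image_of_mem _ (half_mem_Dset dmax Ω)⟩

lemma ff_combo (δ lam : ℝ) :
    ff dmax Ω ri δ lam = (1 - δ) * ff dmax Ω ri 0 lam + δ * ff dmax Ω ri 1 lam := by
  unfold ff; ring

include hΩpos hΩsum in
lemma fmax_upper (hri : 0 ≤ ri) {δ : ℝ} (hδ0 : 0 ≤ δ) (hδ1 : δ ≤ 1) :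
    fmax dmax Ω ri δ ≤ (1 - δ) * fmax dmax Ω ri 0 + δ * fmax dmax Ω ri 1 := by
  apply csSup_le (ffimg_nonempty δ)
  rintro _ ⟨lam, hlam, rfl⟩
  rw [ff_combo]
  have h0 : ff dmax Ω ri 0 lam ≤ fmax dmax Ω ri 0 :=
    le_csSup (bddAbove_ffimg hΩpos hΩsum hri le_rfl zero_le_one)
      (Set.mem_image_of_mem _ hlam)
  have h1 : ff dmax Ω ri 1 lam ≤ fmax dmax Ω ri 1 :=
    le_csSup (bddAbove_ffimg hΩpos hΩsum hri zero_le_one le_rfl)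
      (Set.mem_image_of_mem _ hlam)
  have := mul_le_mul_of_nonneg_left h0 (by linarith : (0:ℝ) ≤ 1 - δ)
  have := mul_le_mul_of_nonneg_left h1 hδ0
  linarith

include hΩpos hΩsum in
lemma ff_le_fmax (hri : 0 ≤ ri) {δ lam : ℝ} (hδ0 : 0 ≤ δ) (hδ1 : δ ≤ 1)
    (hlam : lam ∈ Dset dmax Ω) : ff dmax Ω ri δ lam ≤ fmax dmax Ω ri δ :=
  le_csSup (bddAbove_ffimg hΩpos hΩsum hri hδ0 hδ1) (Set.mem_image_of_mem _ hlam)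

include hΩpos hΩsum in
lemma tendsto_fmax (hri : 0 ≤ ri) :
    Tendsto (fun δ => fmax dmax Ω ri δ) (nhdsWithin 0 (Set.Ioi 0))
      (nhds (fmax dmax Ω ri 0)) := by
  rw [tendsto_order]
  constructor
  · intro b hb
    obtain ⟨_, ⟨lam, hlam, rfl⟩, hval⟩ := exists_lt_of_lt_csSup (ffimg_nonempty 0) hb
    have hcont : Continuous fun δ : ℝ => ff dmax Ω ri δ lam := by
      unfold ff; fun_prop
    have hev : ∀ᶠ δ in nhdsWithin 0 (Set.Ioi 0), b < ff dmax Ω ri δ lam :=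
      ((hcont.tendsto 0).mono_left nhdsWithin_le_nhds).eventually_const_lt hval
    have hmem : Set.Ioo (0:ℝ) 1 ∈ nhdsWithin (0:ℝ) (Set.Ioi 0) :=
      Ioo_mem_nhdsGT_of_mem ⟨le_refl 0, zero_lt_one⟩
    filter_upwards [hev, hmem] with δ h1 h2
    exact h1.trans_le (ff_le_fmax hΩpos hΩsum hri h2.1.le h2.2.le hlam)
  · intro b hb
    have hcont : Continuous fun δ : ℝ => (1 - δ) * fmax dmax Ω ri 0 + δ * fmax dmax Ω ri 1 := by
      fun_prop
    have hev : ∀ᶠ δ in nhdsWithin 0 (Set.Ioi 0),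
        (1 - δ) * fmax dmax Ω ri 0 + δ * fmax dmax Ω ri 1 < b :=
      ((hcont.tendsto 0).mono_left nhdsWithin_le_nhds).eventually_lt_const
        (show (1 - (0:ℝ)) * fmax dmax Ω ri 0 + 0 * fmax dmax Ω ri 1 < b by simpa using hb)
    have hmem : Set.Ioo (0:ℝ) 1 ∈ nhdsWithin (0:ℝ) (Set.Ioi 0) :=
      Ioo_mem_nhdsGT_of_mem ⟨le_refl 0, zero_lt_one⟩
    filter_upwards [hev, hmem] with δ h1 h2
    exact (fmax_upper hΩpos hΩsum hri h2.1.le h2.2.le).trans_lt h1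

end Aux

/-- Theorem 3 (positive normalized typical minimum distance region): `δ* > 0` if and
only if `r_i·(1 − r_o) > sup_{λ ∈ 𝒟_λ} [ r_i·H_b(λ) + log₂(1 − ρ_λ) ]`. -/
theorem stmt_10 (dmax : ℕ) (Ω : ℕ → ℝ)
    (hΩpos : ∀ j ∈ Finset.Icc 1 dmax, 0 ≤ Ω j)
    (hΩsum : ∑ j ∈ Finset.Icc 1 dmax, Ω j = 1)
    (ri ro : ℝ) (hri : ri ∈ Set.Ioc (0 : ℝ) 1) (hro : ro ∈ Set.Ioo (0 : ℝ) 1) :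
    0 < deltaStar dmax Ω ri ro ↔
      ri * (1 - ro) >
        sSup ((fun lam => ri * Hb lam + Real.logb 2 (1 - rho dmax Ω lam)) ''
          Dset dmax Ω) := by
  obtain ⟨hri0, hri1⟩ := hri
  obtain ⟨hro0, hro1⟩ := hro
  -- the RHS sup is `fmax 0`
  have himg : (fun lam => ri * Hb lam + Real.logb 2 (1 - rho dmax Ω lam)) =
      ff dmax Ω ri 0 := by
    funext lam; simp [ff]
  rw [himg]
  have hfmax0 : sSup (ff dmax Ω ri 0 '' Dset dmax Ω) = fmax dmax Ω ri 0 := rfl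
  rw [hfmax0]
  set c := ri * (1 - ro) with hc
  set S := fmax dmax Ω ri 0 with hS
  -- the limit of Gr at 0⁺
  have hT : Tendsto (Gr dmax Ω ri ro) (nhdsWithin 0 (Set.Ioi 0)) (nhds (S - c)) := by
    have h1 : Tendsto Hb (nhdsWithin (0:ℝ) (Set.Ioi 0)) (nhds 0) := by
      have := (Hb_continuous.tendsto 0).mono_left
        (nhdsWithin_le_nhds (s := Set.Ioi (0:ℝ)))
      rwa [Hb_zero] at this
    have h2 := tendsto_fmax hΩpos hΩsum hri0.le
    have h3 := (h1.sub_const c).add h2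
    rw [show (0:ℝ) - c + fmax dmax Ω ri 0 = S - c by rw [hS]; ring] at h3
    exact h3
  have hlim : limUnder (nhdsWithin 0 (Set.Ioi 0)) (Gr dmax Ω ri ro) = S - c :=
    hT.limUnder_eq
  -- Gr (1/2) > 0
  have hGhalf : 0 < Gr dmax Ω ri ro (1/2) := by
    have hle : ff dmax Ω ri (1/2) (1/2) ≤ fmax dmax Ω ri (1/2) :=
      ff_le_fmax hΩpos hΩsum hri0.le (by norm_num) (by norm_num) (half_mem_Dset dmax Ω)
    have hval : ff dmax Ω ri (1/2) (1/2) = ri - 1 := by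
      unfold ff
      rw [rho_half hΩsum, Hb_half]
      have : Real.logb 2 (1/2 : ℝ) = -1 := by
        rw [one_div, Real.logb_inv, Real.logb_self_eq_one one_lt_two]
      rw [show (1:ℝ) - 1/2 = 1/2 by norm_num, this]
      ring
    unfold Gr
    rw [Hb_half]
    nlinarith [hle, hval]
  constructor
  · -- if δ* > 0 then c > S
    intro hpos
    by_contra hle
    push_neg at hle  -- c ≤ S
    have : 0 ≤ limUnder (nhdsWithin 0 (Set.Ioi 0)) (Gr dmax Ω ri ro) := by
      rw [hlim]; linarith
    rw [deltaStar, if_pos this] at hpos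
    exact lt_irrefl 0 hpos
  · -- if c > S then δ* > 0
    intro hgt
    have hneg : ¬ 0 ≤ limUnder (nhdsWithin 0 (Set.Ioi 0)) (Gr dmax Ω ri ro) := by
      rw [hlim]; push_neg; linarith
    rw [deltaStar, if_neg hneg]
    -- eventually Gr < 0 near 0⁺
    have hev : ∀ᶠ δ in nhdsWithin 0 (Set.Ioi 0), Gr dmax Ω ri ro δ < 0 :=
      hT.eventually_lt_const (by linarith : S - c < 0)
    rw [eventually_nhdsWithin_iff, Metric.eventually_nhds_iff] at hev
    obtain ⟨ε, hε, hball⟩ := hev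
    have hne : {δ : ℝ | 0 < δ ∧ 0 < Gr dmax Ω ri ro δ}.Nonempty :=
      ⟨1/2, by norm_num, hGhalf⟩
    have hlb : ∀ x ∈ {δ : ℝ | 0 < δ ∧ 0 < Gr dmax Ω ri ro δ}, ε ≤ x := by
      rintro x ⟨hx0, hxG⟩
      by_contra hlt
      push_neg at hlt
      have hd : dist x 0 < ε := by
        rw [Real.dist_eq, sub_zero, abs_of_pos hx0]; exact hlt
      exact absurd (hball hd hx0) (not_lt.mpr hxG.le)
    exact lt_of_lt_of_le hε (le_csInf hne hlb)
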